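/- Let P be a submonoid of a group G. The following are equivalent: (1) no finite collection of proper constructible right ideals of P is a foundation set for P; (2) for every nonempty constructible right ideal S of P, no finite collection of constructible right ideals is a proper foundation set for S. -/
import Mathlib


namespace PaperToeplitz

variable {G : Type*} [Group G]

/-- A word `(p₁, p₂, …, p_{2k-1}, p_{2k})` in `P`, encoded as its list of consecutive pairs
`[(p₁,p₂), …, (p_{2k-1},p_{2k})]`. Concatenation of words is list append. -/
abbrev Word (P : Submonoid G) : Type _ := List (P × P)

/-- The generalized left quotient `α̇ := p₁⁻¹ p₂ ⋯ p_{2k-1}⁻¹ p_{2k} ∈ G`.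
A word is *neutral* if `α̇ = 1`. -/
def dotProd {P : Submonoid G} (α : Word P) : G :=
  (α.map fun x => ((x.1 : G))⁻¹ * (x.2 : G)).prod

/-- The reverse word `α̃ := (p_{2k}, p_{2k-1}, …, p₂, p₁)`. -/
def rev {P : Submonoid G} (α : Word P) : Word P :=
  α.reverse.map fun x => (x.2, x.1)

/-- The iterated quotient set
`Q(α) := {e, p_{2k}⁻¹p_{2k-1}, p_{2k}⁻¹p_{2k-1}p_{2k-2}⁻¹p_{2k-3}, …, p_{2k}⁻¹p_{2k-1}⋯p₂⁻¹p₁}`,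
realized as the set of prefix products. -/
def Qset {P : Submonoid G} (α : Word P) : Set G :=
  {g | ∃ n : ℕ, ((α.reverse.map fun x => ((x.2 : G))⁻¹ * (x.1 : G)).take n).prod = g}

/-- The left translate `xP = {xq : q ∈ P}` of `P`, as a subset of `G`. -/
def lcos (P : Submonoid G) (x : G) : Set G := {y : G | x⁻¹ * y ∈ P}

/-- The constructible ideal `K(α) := ⋂_{g ∈ Q(α)} gP` (a subset of `P` since `e ∈ Q(α)`). -/
def Kset {P : Submonoid G} (α : Word P) : Set G :=
  ⋂ g ∈ Qset α, lcos P g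

/-- The collection `𝔍(P)` of constructible right ideals of `P`. -/
def CIdeals (P : Submonoid G) : Set (Set G) := {S | ∃ α : Word P, Kset α = S}

end PaperToeplitz

namespace PaperToeplitz


lemma one_mem_Qset {G : Type*} [Group G] {P : Submonoid G} (α : Word P) :
    (1 : G) ∈ Qset α := ⟨0, rfl⟩

lemma Kset_subset {G : Type*} [Group G] {P : Submonoid G} (α : Word P) :
    Kset α ⊆ (P : Set G) := by
  intro y hy
  have := Set.mem_iInter₂.1 hy 1 (one_mem_Qset α)
  simpa [lcos] using this

lemma Kset_mul_mem {G : Type*} [Group G] {P : Submonoid G} (α : Word P) {y : G}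
    (hy : y ∈ Kset α) {p : G} (hp : p ∈ P) : y * p ∈ Kset α := by
  refine Set.mem_iInter₂.2 fun g hg => ?_
  have h1 : g⁻¹ * y ∈ P := Set.mem_iInter₂.1 hy g hg
  show g⁻¹ * (y * p) ∈ P
  rw [← mul_assoc]
  exact P.mul_mem h1 hp

lemma Kset_nil {G : Type*} [Group G] {P : Submonoid G} :
    Kset ([] : Word P) = (P : Set G) := by
  have hq : Qset ([] : Word P) = {1} := by
    ext g
    constructor
    · rintro ⟨n, rfl⟩; simp
    · rintro rfl; exact one_mem_Qset _
  simp [Kset, hq, lcos]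

lemma Qset_append {G : Type*} [Group G] {P : Submonoid G} (α : Word P) (x : P) :
    Qset (α ++ [((1 : P), x)]) = {1} ∪ (fun g => (x : G)⁻¹ * g) '' Qset α := by
  ext g
  simp only [Qset, Set.mem_setOf_eq, Set.mem_union, Set.mem_image, Set.mem_singleton_iff]
  constructor
  · rintro ⟨n, rfl⟩
    rcases n with _ | m
    · left; simp
    · right
      refine ⟨((α.reverse.map fun y => ((y.2 : G))⁻¹ * (y.1 : G)).take m).prod, ⟨m, rfl⟩, ?_⟩
      simp [List.take_succ_cons, mul_assoc]
  · rintro (rfl | ⟨q, ⟨m, rfl⟩, rfl⟩)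
    · exact ⟨0, rfl⟩
    · exact ⟨m + 1, by simp [List.take_succ_cons, mul_assoc]⟩

lemma Kset_append {G : Type*} [Group G] {P : Submonoid G} (α : Word P) (x : P) :
    Kset (α ++ [((1 : P), x)]) = {y : G | y ∈ P ∧ (x : G) * y ∈ Kset α} := by
  ext y
  simp only [Kset, Qset_append, Set.mem_setOf_eq, Set.mem_iInter]
  constructor
  · intro h
    refine ⟨by simpa [lcos] using h 1 (Or.inl rfl), ?_⟩
    intro g hg
    have := h ((x : G)⁻¹ * g) (Or.inr ⟨g, hg, rfl⟩)
    simpa [lcos, mul_assoc] using this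
  · rintro ⟨hyP, hK⟩ g hg
    rcases hg with rfl | ⟨q, hq, rfl⟩
    · simpa [lcos] using hyP
    · have := hK q hq
      simpa [lcos, mul_assoc] using this

/-- A finite collection `C` of constructible right ideals is a *foundation set* for
`S ∈ 𝔍(P)` if every `R ∈ C` is a constructible ideal contained in `S` and for every
`p ∈ S` one has `pP ∩ ⋃_{R∈C} R ≠ ∅`. -/
def IsFoundationSet {G : Type*} [Group G] (P : Submonoid G)
    (C : Finset (Set G)) (S : Set G) : Prop :=
  (∀ R ∈ C, R ∈ CIdeals P) ∧ (∀ R ∈ C, R ⊆ S) ∧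
    ∀ p ∈ S, (lcos P p ∩ ⋃ R ∈ C, R).Nonempty

set_option maxHeartbeats 1000000 in
/-- The following are equivalent: (1) no finite collection of proper constructible right
ideals of `P` is a foundation set for `P`; (2) for every nonempty constructible right ideal
`S` of `P`, no finite collection of constructible right ideals is a proper foundation set
for `S` (proper meaning `S ∖ ⋃_{R∈C} R ≠ ∅`). -/
theorem statement11 {G : Type*} [Group G] (P : Submonoid G) :
    (¬ ∃ C : Finset (Set G), (∀ R ∈ C, R ≠ (P : Set G)) ∧
        IsFoundationSet P C (P : Set G)) ↔
    (∀ S ∈ CIdeals P, S.Nonempty →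
      ¬ ∃ C : Finset (Set G), IsFoundationSet P C S ∧ (S \ ⋃ R ∈ C, R).Nonempty) := by
  classical
  constructor
  · intro h S hS hSne
    rintro ⟨C, ⟨hCid, hCsub, hCfound⟩, x, hxS, hxnot⟩
    obtain ⟨α, rfl⟩ := hS
    have hxP : x ∈ P := Kset_subset α hxS
    apply h
    refine ⟨C.image (fun R => {y : G | y ∈ P ∧ x * y ∈ R}), ?_, ?_, ?_, ?_⟩
    · rintro R' hR'
      obtain ⟨R, hRC, rfl⟩ := Finset.mem_image.1 hR'
      intro heq
      have h1 : (1 : G) ∈ {y : G | y ∈ P ∧ x * y ∈ R} := by rw [heq]; exact P.one_mem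
      have : x ∈ R := by simpa using h1.2
      exact hxnot (Set.mem_iUnion₂.2 ⟨R, hRC, this⟩)
    · rintro R' hR'
      obtain ⟨R, hRC, rfl⟩ := Finset.mem_image.1 hR'
      obtain ⟨β, rfl⟩ := hCid R hRC
      refine ⟨β ++ [((1 : P), ⟨x, hxP⟩)], ?_⟩
      exact Kset_append β ⟨x, hxP⟩
    · rintro R' hR'
      obtain ⟨R, hRC, rfl⟩ := Finset.mem_image.1 hR'
      exact fun y hy => hy.1
    · intro p hp
      have hxpS : x * p ∈ Kset α := Kset_mul_mem α hxS hp
      obtain ⟨y', hy'lcos, hy'U⟩ := hCfound (x * p) hxpS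
      obtain ⟨R, hRC, hy'R⟩ := Set.mem_iUnion₂.1 hy'U
      have hy'lcos' : (x * p)⁻¹ * y' ∈ P := hy'lcos
      refine ⟨x⁻¹ * y', ?_, ?_⟩
      · show p⁻¹ * (x⁻¹ * y') ∈ P
        simpa [mul_inv_rev, mul_assoc] using hy'lcos'
      · refine Set.mem_iUnion₂.2 ⟨_, Finset.mem_image_of_mem _ hRC, ?_, by simpa⟩
        have : x⁻¹ * y' = p * (p⁻¹ * (x⁻¹ * y')) := by group
        rw [this]
        refine P.mul_mem hp ?_
        simpa [mul_inv_rev, mul_assoc] using hy'lcos'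
  · intro h
    rintro ⟨C, hne, hfound⟩
    refine h _ ⟨[], Kset_nil⟩ ⟨1, P.one_mem⟩ ⟨C, hfound, 1, P.one_mem, ?_⟩
    intro h1
    obtain ⟨R, hRC, h1R⟩ := Set.mem_iUnion₂.1 h1
    apply hne R hRC
    refine Set.Subset.antisymm (hfound.2.1 R hRC) ?_
    intro p hp
    obtain ⟨β, rfl⟩ := hfound.1 R hRC
    simpa using Kset_mul_mem β h1R hp


end PaperToeplitz
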